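/- Let u : [0,∞) → ℝ be twice continuously differentiable with u(0)=u'(0)=0 and with u, u'' square-integrable on (0,∞). Then sup_{x≥0} |u(x)| ≤ √2 · ‖u''‖_{L²(0,∞)}^{1/4} · ‖u‖_{L²(0,∞)}^{3/4}. -/

import Mathlib

/-!
Write `A`, `B`, `C` for the squared `L²(0, ∞)` norms of `u`, `u'`, `u''`. Since
`u x ^ 2 = 2 ∫₀ˣ u u'`, Cauchy–Schwarz gives `u x ^ 2 ≤ 2 √A √B`, so it suffices to prove the
interpolation inequality `B ≤ √A √C`. It follows from `∫ u'² = -∫ u u''` (integration by parts)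
once the boundary term `u u'` vanishes at infinity, which holds as soon as `u' ∈ L²`: then both
`u u'` and its derivative `u'² + u u''` are integrable. Finally `u' ∈ L²` comes from the same
argument on `[0, x]`: with `Bₓ = ∫₀ˣ u'²` one has `u x ^ 2 ≤ 2 √A √Bₓ`, `u' x ^ 2 ≤ 2 √Bₓ √C`
(using `u' 0 = 0`) and `Bₓ = u x u' x - ∫₀ˣ u u''`, which together bound `Bₓ` by `6 √A √C`
uniformly in `x`.
-/

open MeasureTheory Real Filter Set Topology

theorem abs_integral_mul_le_sqrt_integral_sq_mul_sqrt_integral_sq {α : Type*} [MeasurableSpace α]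
    {μ : Measure α} {f g : α → ℝ} (hf : MemLp f 2 μ) (hg : MemLp g 2 μ) :
    |∫ x, f x * g x ∂μ| ≤ √(∫ x, f x ^ 2 ∂μ) * √(∫ x, g x ^ 2 ∂μ) := by
  have holder := integral_mul_norm_le_Lp_mul_Lq (p := 2) (q := 2)
    (by norm_num [Real.holderConjugate_iff]) (by simpa using hf) (by simpa using hg)
  simp only [Real.norm_eq_abs, Real.rpow_two, sq_abs, ← Real.sqrt_eq_rpow] at holder
  calc |∫ x, f x * g x ∂μ| ≤ ∫ x, |f x| * |g x| ∂μ := by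
        simpa only [abs_mul] using abs_integral_le_integral_abs (f := fun x => f x * g x) (μ := μ)
    _ ≤ _ := holder

theorem Continuous.memLp_two_restrict_of_integrableOn_sq {f : ℝ → ℝ} {s : Set ℝ}
    (hf : Continuous f) (hf2 : IntegrableOn (fun x => f x ^ 2) s) :
    MemLp f 2 (volume.restrict s) :=
  (memLp_two_iff_integrable_sq hf.aestronglyMeasurable).2 hf2

theorem integrableOn_mul_of_integrableOn_sq {f g : ℝ → ℝ} {s : Set ℝ}
    (hf : Continuous f) (hg : Continuous g)
    (hf2 : IntegrableOn (fun x => f x ^ 2) s) (hg2 : IntegrableOn (fun x => g x ^ 2) s) :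
    IntegrableOn (fun x => f x * g x) s :=
  (hf.memLp_two_restrict_of_integrableOn_sq hf2).integrable_mul
    (hg.memLp_two_restrict_of_integrableOn_sq hg2)

theorem abs_intervalIntegral_mul_le_sqrt_integral_sq_mul_sqrt_integral_sq {f g : ℝ → ℝ}
    (hf : Continuous f) (hg : Continuous g) {a b : ℝ} (hab : a ≤ b) :
    |∫ x in a..b, f x * g x| ≤ √(∫ x in a..b, f x ^ 2) * √(∫ x in a..b, g x ^ 2) := by
  simp only [intervalIntegral.integral_of_le hab]
  exact abs_integral_mul_le_sqrt_integral_sq_mul_sqrt_integral_sq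
    (hf.memLp_two_restrict_of_integrableOn_sq (hf.pow 2).integrableOn_Ioc)
    (hg.memLp_two_restrict_of_integrableOn_sq (hg.pow 2).integrableOn_Ioc)

theorem intervalIntegral_le_integral_Ioi {f : ℝ → ℝ} {a b : ℝ} (hab : a ≤ b)
    (hf : IntegrableOn f (Ioi a)) (hf0 : ∀ x, 0 ≤ f x) :
    ∫ x in a..b, f x ≤ ∫ x in Ioi a, f x := by
  rw [intervalIntegral.integral_of_le hab]
  exact setIntegral_mono_set hf (ae_of_all _ hf0) Ioc_subset_Ioi_self.eventuallyLE

theorem abs_le_sqrt_two_mul_rpow_mul_rpow {t a c : ℝ} (ha : 0 ≤ a) (hc : 0 ≤ c)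
    (h : t ^ 2 ≤ 2 * a * √(a * c)) :
    |t| ≤ √2 * c ^ (1 / 4 : ℝ) * a ^ (3 / 4 : ℝ) := by
  have hsq : 2 * a * √(a * c) = (√2 * c ^ (1 / 4 : ℝ) * a ^ (3 / 4 : ℝ)) ^ 2 := by
    rw [mul_pow, mul_pow, sq_sqrt zero_le_two, ← rpow_mul_natCast hc, ← rpow_mul_natCast ha,
      sqrt_mul ha, sqrt_eq_rpow, sqrt_eq_rpow, show (3 / 4 : ℝ) * (2 : ℕ) = 1 + 1 / 2 by norm_num,
      rpow_add' ha (by norm_num), rpow_one]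
    norm_num
    ring
  rw [hsq] at h
  exact (abs_le_sqrt h).trans_eq (sqrt_sq (by positivity))

section HalfLine

variable {u u' u'' : ℝ → ℝ} {a b : ℝ}

theorem sq_le_two_mul_sqrt_intervalIntegral_sq_mul_sqrt_intervalIntegral_deriv_sq
    (hu : ∀ x, HasDerivAt u (u' x) x) (hu' : Continuous u') (ha : u a = 0) (hab : a ≤ b) :
    u b ^ 2 ≤ 2 * √(∫ x in a..b, u x ^ 2) * √(∫ x in a..b, u' x ^ 2) := by
  have hu_cont : Continuous u := continuous_iff_continuousAt.2 fun x => (hu x).continuousAt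
  have ftc : u b ^ 2 = ∫ x in a..b, 2 * (u x * u' x) := by
    rw [intervalIntegral.integral_eq_sub_of_hasDerivAt (f := fun x => u x ^ 2)
      (f' := fun x => 2 * (u x * u' x)) (fun x _ => ((hu x).pow 2).congr_deriv (by ring))
      ((by fun_prop : Continuous fun x => 2 * (u x * u' x)).intervalIntegrable a b), ha]
    ring
  rw [ftc, intervalIntegral.integral_const_mul, mul_assoc]
  gcongr
  exact (le_abs_self _).trans
    (abs_intervalIntegral_mul_le_sqrt_integral_sq_mul_sqrt_integral_sq hu_cont hu' hab)

theorem intervalIntegral_deriv_sq_le_six_mul_sqrt_mul_sqrt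
    (hu : ∀ x, HasDerivAt u (u' x) x) (hu' : ∀ x, HasDerivAt u' (u'' x) x) (hu'' : Continuous u'')
    (ha : u a = 0) (ha' : u' a = 0) (hab : a ≤ b) :
    ∫ x in a..b, u' x ^ 2 ≤ 6 * √(∫ x in a..b, u x ^ 2) * √(∫ x in a..b, u'' x ^ 2) := by
  set A := ∫ x in a..b, u x ^ 2
  set B := ∫ x in a..b, u' x ^ 2
  set C := ∫ x in a..b, u'' x ^ 2
  have hu_cont : Continuous u := continuous_iff_continuousAt.2 fun x => (hu x).continuousAt
  have hu'_cont : Continuous u' := continuous_iff_continuousAt.2 fun x => (hu' x).continuousAt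
  have hB : 0 ≤ B := intervalIntegral.integral_nonneg hab fun x _ => sq_nonneg _
  have hub : u b ^ 2 ≤ 2 * √A * √B :=
    sq_le_two_mul_sqrt_intervalIntegral_sq_mul_sqrt_intervalIntegral_deriv_sq hu hu'_cont ha hab
  have hu'b : u' b ^ 2 ≤ 2 * √B * √C :=
    sq_le_two_mul_sqrt_intervalIntegral_sq_mul_sqrt_intervalIntegral_deriv_sq hu' hu'' ha' hab
  have parts : B = u b * u' b - ∫ x in a..b, u x * u'' x := by
    have := intervalIntegral.integral_mul_deriv_eq_deriv_mul (fun x _ => hu x) (fun x _ => hu' x)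
      (hu'_cont.intervalIntegrable a b) (hu''.intervalIntegrable a b)
    simp only [ha, zero_mul, sub_zero, ← sq] at this
    linarith
  have hcs : -∫ x in a..b, u x * u'' x ≤ √A * √C :=
    (neg_le_abs _).trans
      (abs_intervalIntegral_mul_le_sqrt_integral_sq_mul_sqrt_integral_sq hu_cont hu'' hab)
  have hprod : (u b * u' b) ^ 2 ≤ 4 * (√A * √C) * B :=
    calc (u b * u' b) ^ 2 = u b ^ 2 * u' b ^ 2 := mul_pow _ _ _
      _ ≤ (2 * √A * √B) * (2 * √B * √C) := mul_le_mul hub hu'b (sq_nonneg _) (by positivity)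
      _ = 4 * (√A * √C) * B := by linear_combination (4 * √A * √C) * sq_sqrt hB
  -- `B - √A √C ≤ u b u' b` and `hprod` force `B ≤ (3 + 2√2) √A √C`.
  have hs : 0 ≤ √A * √C := by positivity
  nlinarith

theorem integrableOn_Ioi_deriv_sq
    (hu : ∀ x, HasDerivAt u (u' x) x) (hu' : ∀ x, HasDerivAt u' (u'' x) x) (hu'' : Continuous u'')
    (ha : u a = 0) (ha' : u' a = 0) (huL2 : IntegrableOn (fun x => u x ^ 2) (Ioi a))
    (hu''L2 : IntegrableOn (fun x => u'' x ^ 2) (Ioi a)) :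
    IntegrableOn (fun x => u' x ^ 2) (Ioi a) := by
  have hu'_cont : Continuous u' := continuous_iff_continuousAt.2 fun x => (hu' x).continuousAt
  refine integrableOn_Ioi_of_intervalIntegral_norm_bounded
    (6 * √(∫ x in Ioi a, u x ^ 2) * √(∫ x in Ioi a, u'' x ^ 2)) a
    (fun _ => (hu'_cont.pow 2).integrableOn_Ioc) tendsto_id ?_
  filter_upwards [eventually_ge_atTop a] with b hab
  simp only [id, norm_pow, Real.norm_eq_abs, sq_abs]
  calc ∫ x in a..b, u' x ^ 2
      ≤ 6 * √(∫ x in a..b, u x ^ 2) * √(∫ x in a..b, u'' x ^ 2) :=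
        intervalIntegral_deriv_sq_le_six_mul_sqrt_mul_sqrt hu hu' hu'' ha ha' hab
    _ ≤ 6 * √(∫ x in Ioi a, u x ^ 2) * √(∫ x in Ioi a, u'' x ^ 2) := by
        gcongr
        · exact intervalIntegral_le_integral_Ioi hab huL2 fun x => sq_nonneg _
        · exact intervalIntegral_le_integral_Ioi hab hu''L2 fun x => sq_nonneg _

theorem tendsto_mul_deriv_atTop_nhds_zero
    (hu : ∀ x, HasDerivAt u (u' x) x) (hu' : ∀ x, HasDerivAt u' (u'' x) x) (hu'' : Continuous u'')
    (huL2 : IntegrableOn (fun x => u x ^ 2) (Ioi a))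
    (hu'L2 : IntegrableOn (fun x => u' x ^ 2) (Ioi a))
    (hu''L2 : IntegrableOn (fun x => u'' x ^ 2) (Ioi a)) :
    Tendsto (fun x => u x * u' x) atTop (𝓝 0) := by
  have hu_cont : Continuous u := continuous_iff_continuousAt.2 fun x => (hu x).continuousAt
  have hu'_cont : Continuous u' := continuous_iff_continuousAt.2 fun x => (hu' x).continuousAt
  exact tendsto_zero_of_hasDerivAt_of_integrableOn_Ioi (a := a)
    (f' := fun x => u' x ^ 2 + u x * u'' x)
    (fun x _ => ((hu x).mul (hu' x)).congr_deriv (by ring))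
    (hu'L2.add (integrableOn_mul_of_integrableOn_sq hu_cont hu'' huL2 hu''L2))
    (integrableOn_mul_of_integrableOn_sq hu_cont hu'_cont huL2 hu'L2)

theorem integral_Ioi_deriv_sq_le_sqrt_mul_sqrt
    (hu : ∀ x, HasDerivAt u (u' x) x) (hu' : ∀ x, HasDerivAt u' (u'' x) x) (hu'' : Continuous u'')
    (ha : u a = 0) (huL2 : IntegrableOn (fun x => u x ^ 2) (Ioi a))
    (hu'L2 : IntegrableOn (fun x => u' x ^ 2) (Ioi a))
    (hu''L2 : IntegrableOn (fun x => u'' x ^ 2) (Ioi a)) :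
    ∫ x in Ioi a, u' x ^ 2 ≤ √(∫ x in Ioi a, u x ^ 2) * √(∫ x in Ioi a, u'' x ^ 2) := by
  have hu_cont : Continuous u := continuous_iff_continuousAt.2 fun x => (hu x).continuousAt
  have hu'_cont : Continuous u' := continuous_iff_continuousAt.2 fun x => (hu' x).continuousAt
  have h_zero : Tendsto (u * u') (𝓝[>] a) (𝓝 0) := by
    simpa [ha] using ((hu_cont.mul hu'_cont).tendsto a).mono_left nhdsWithin_le_nhds
  have parts := integral_Ioi_mul_deriv_eq_deriv_mul (fun x _ => hu x) (fun x _ => hu' x)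
    (integrableOn_mul_of_integrableOn_sq hu_cont hu'' huL2 hu''L2)
    (by simpa only [sq] using hu'L2 : IntegrableOn (fun x => u' x * u' x) _) h_zero
    (tendsto_mul_deriv_atTop_nhds_zero hu hu' hu'' huL2 hu'L2 hu''L2)
  simp only [zero_sub, ← sq] at parts
  calc ∫ x in Ioi a, u' x ^ 2 = -∫ x in Ioi a, u x * u'' x := by linarith
    _ ≤ _ := (neg_le_abs _).trans (abs_integral_mul_le_sqrt_integral_sq_mul_sqrt_integral_sq
        (hu_cont.memLp_two_restrict_of_integrableOn_sq huL2)
        (hu''.memLp_two_restrict_of_integrableOn_sq hu''L2))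

end HalfLine

/-- Gagliardo–Nirenberg inequality on the half-line: for `u ∈ H²(ℝ⁺)` with
`u(0)=u'(0)=0`, `sup_{x≥0} |u(x)| ≤ √2 ‖u''‖^{1/4} ‖u‖^{3/4}`. -/
theorem gagliardo_nirenberg_halfline (u : ℝ → ℝ)
    (hu : ContDiff ℝ 2 u)
    (hu0 : u 0 = 0) (hu'0 : deriv u 0 = 0)
    (huL2 : IntegrableOn (fun x => (u x) ^ 2) (Set.Ioi 0))
    (hu''L2 : IntegrableOn (fun x => (deriv (deriv u) x) ^ 2) (Set.Ioi 0)) :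
    ∀ x : ℝ, 0 ≤ x →
      |u x| ≤ Real.sqrt 2 *
        (Real.sqrt (∫ y in Set.Ioi (0:ℝ), (deriv (deriv u) y) ^ 2)) ^ ((1:ℝ)/4) *
        (Real.sqrt (∫ y in Set.Ioi (0:ℝ), (u y) ^ 2)) ^ ((3:ℝ)/4) := by
  intro x hx
  have hu' : ContDiff ℝ 1 (deriv u) := hu.deriv'
  have hdu : ∀ y, HasDerivAt u (deriv u y) y :=
    fun y => (hu.differentiable two_ne_zero y).hasDerivAt
  have hdu' : ∀ y, HasDerivAt (deriv u) (deriv (deriv u) y) y :=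
    fun y => (hu'.differentiable one_ne_zero y).hasDerivAt
  have hu'' : Continuous (deriv (deriv u)) := hu'.continuous_deriv le_rfl
  have hu'L2 := integrableOn_Ioi_deriv_sq hdu hdu' hu'' hu0 hu'0 huL2 hu''L2
  refine abs_le_sqrt_two_mul_rpow_mul_rpow (sqrt_nonneg _) (sqrt_nonneg _) ?_
  calc u x ^ 2 ≤ 2 * √(∫ y in (0:ℝ)..x, u y ^ 2) * √(∫ y in (0:ℝ)..x, deriv u y ^ 2) :=
        sq_le_two_mul_sqrt_intervalIntegral_sq_mul_sqrt_intervalIntegral_deriv_sq hdu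
          hu'.continuous hu0 hx
    _ ≤ 2 * √(∫ y in Ioi (0:ℝ), u y ^ 2) * √(∫ y in Ioi (0:ℝ), deriv u y ^ 2) := by
        gcongr
        · exact intervalIntegral_le_integral_Ioi hx huL2 fun y => sq_nonneg _
        · exact intervalIntegral_le_integral_Ioi hx hu'L2 fun y => sq_nonneg _
    _ ≤ _ := by
        gcongr
        exact integral_Ioi_deriv_sq_le_sqrt_mul_sqrt hdu hdu' hu'' hu0 huL2 hu'L2 hu''L2
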